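/- Let C be an open convex cone in a finite-dimensional normed real vector space V and D a balanced cone of directions spanning V. If f : C → ℝ is D-convex and has linear growth (|f(x)| ≤ c(‖x‖+1) for all x ∈ C), then the upper recession function f^∞(x) = limsup_{t→∞, x'→x, tx'∈C} f(tx')/t is real-valued and D-convex on C. -/
import Mathlib


open Set Metric Filter

/-- D-convexity of a real-valued function on a set `S`. -/
def DConvexOn {V : Type*} [NormedAddCommGroup V] [NormedSpace ℝ V]
    (D S : Set V) (f : V → ℝ) : Prop :=
  ∀ ⦃x y : V⦄, x ∈ S → y ∈ S → x - y ∈ D → segment ℝ x y ⊆ S →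
    ConvexOn ℝ (segment ℝ x y) f

/-- The upper recession function `f^∞(x) = limsup_{t→∞, x'→x, t x'∈C} f(t x')/t`,
taking values in the extended reals. -/
noncomputable def upperRecession {V : Type*} [NormedAddCommGroup V] [NormedSpace ℝ V]
    (C : Set V) (f : V → ℝ) (x : V) : EReal :=
  Filter.limsup (fun p : ℝ × V => ((f (p.1 • p.2) / p.1 : ℝ) : EReal))
    ((Filter.atTop ×ˢ nhds x) ⊓ Filter.principal {p : ℝ × V | p.1 • p.2 ∈ C})

section Aux

variable {V : Type*} [NormedAddCommGroup V] [NormedSpace ℝ V]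

/-- Positive scaling preserves membership in the cone. -/
private lemma aux_cone_smul {C : Set V}
    (hCcone : ∀ ⦃s t : ℝ⦄, 0 < s → 0 < t → ∀ ⦃x y : V⦄, x ∈ C → y ∈ C → s • x + t • y ∈ C)
    {t : ℝ} (ht : 0 < t) {x : V} (hx : x ∈ C) : t • x ∈ C := by
  have h := hCcone (half_pos ht) (half_pos ht) hx hx
  rwa [← add_smul, add_halves] at h

/-- For `x ∈ C`, the recession filter at `x` is just the product filter. -/
private lemma aux_filter_eq {C : Set V} (hCopen : IsOpen C)
    (hCcone : ∀ ⦃s t : ℝ⦄, 0 < s → 0 < t → ∀ ⦃x y : V⦄, x ∈ C → y ∈ C → s • x + t • y ∈ C)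
    {x : V} (hx : x ∈ C) :
    (Filter.atTop ×ˢ nhds x) ⊓ Filter.principal {p : ℝ × V | p.1 • p.2 ∈ C}
      = Filter.atTop ×ˢ nhds x := by
  refine le_antisymm inf_le_left (le_inf le_rfl (Filter.le_principal_iff.2 ?_))
  obtain ⟨ε, hε, hball⟩ := Metric.isOpen_iff.1 hCopen x hx
  have : ∀ᶠ p : ℝ × V in Filter.atTop ×ˢ nhds x, p.1 • p.2 ∈ C := by
    filter_upwards [Filter.prod_mem_prod (Filter.Ioi_mem_atTop (0 : ℝ))
      (Metric.ball_mem_nhds x hε)] with p hp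
    exact aux_cone_smul hCcone hp.1 (hball hp.2)
  exact this

/-- The upper recession function is finite on `C`. -/
private lemma aux_coe {C : Set V} (hCopen : IsOpen C)
    (hCcone : ∀ ⦃s t : ℝ⦄, 0 < s → 0 < t → ∀ ⦃x y : V⦄, x ∈ C → y ∈ C → s • x + t • y ∈ C)
    {f : V → ℝ} {c : ℝ} (hgrowth : ∀ x ∈ C, |f x| ≤ c * (‖x‖ + 1))
    {x : V} (hx : x ∈ C) :
    upperRecession C f x = (((upperRecession C f x).toReal : ℝ) : EReal) := by
  obtain ⟨ε, hε, hball⟩ := Metric.isOpen_iff.1 hCopen x hx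
  have hc : 0 ≤ c := by nlinarith [hgrowth x hx, abs_nonneg (f x), norm_nonneg x]
  set B : ℝ := c * (‖x‖ + ε) + c with hB
  have hev : ∀ᶠ p : ℝ × V in
      (Filter.atTop ×ˢ nhds x) ⊓ Filter.principal {p : ℝ × V | p.1 • p.2 ∈ C},
      |f (p.1 • p.2) / p.1| ≤ B := by
    rw [aux_filter_eq hCopen hCcone hx]
    filter_upwards [Filter.prod_mem_prod (Filter.Ici_mem_atTop (1 : ℝ))
      (Metric.ball_mem_nhds x hε)] with p hp
    obtain ⟨h1, h2⟩ := hp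
    have ht : (0 : ℝ) < p.1 := lt_of_lt_of_le one_pos h1
    have hmem : p.1 • p.2 ∈ C := aux_cone_smul hCcone ht (hball h2)
    have hg := hgrowth _ hmem
    have hnorm : ‖p.1 • p.2‖ = p.1 * ‖p.2‖ := by
      rw [norm_smul, Real.norm_eq_abs, abs_of_pos ht]
    rw [hnorm] at hg
    have h2' : ‖p.2‖ ≤ ‖x‖ + ε := by
      have hb1 := mem_ball_iff_norm.1 h2
      have hb2 := norm_sub_norm_le p.2 x
      linarith
    have h1' : (1 : ℝ) ≤ p.1 := h1
    rw [abs_div, abs_of_pos ht, div_le_iff₀ ht, hB]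
    nlinarith [hg, mul_le_mul_of_nonneg_left h2' (mul_nonneg hc ht.le),
      mul_le_mul_of_nonneg_left h1' hc, hc]
  haveI : ((Filter.atTop ×ˢ nhds x) ⊓
      Filter.principal {p : ℝ × V | p.1 • p.2 ∈ C}).NeBot := by
    rw [aux_filter_eq hCopen hCcone hx]
    infer_instance
  have hub : upperRecession C f x ≤ (B : EReal) := by
    refine Filter.limsup_le_of_le (by isBoundedDefault) ?_
    exact hev.mono fun p hp => by exact_mod_cast (abs_le.1 hp).2
  have hlb : ((-B : ℝ) : EReal) ≤ upperRecession C f x := by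
    refine Filter.le_limsup_of_frequently_le ?_ (by isBoundedDefault)
    exact (hev.mono fun p hp => by exact_mod_cast (abs_le.1 hp).1).frequently
  have hT : upperRecession C f x ≠ ⊤ := by
    intro h
    rw [h] at hub
    exact (not_le.2 (EReal.coe_lt_top B)) hub
  have hBot : upperRecession C f x ≠ ⊥ := by
    intro h
    rw [h] at hlb
    exact (EReal.coe_ne_bot (-B)) (le_bot_iff.1 hlb)
  exact (EReal.coe_toReal hT hBot).symm

end Aux

/-- the upper recession function of a D-convex function of linear
growth on an open convex cone is real-valued and D-convex. -/
theorem upperRecession_real_and_dconvex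
    {V : Type*} [NormedAddCommGroup V] [NormedSpace ℝ V] [FiniteDimensional ℝ V]
    (D : Set V) (hDbal : ∀ (t : ℝ), ∀ x ∈ D, t • x ∈ D)
    (hDspan : Submodule.span ℝ D = ⊤)
    (C : Set V) (hCopen : IsOpen C)
    (hCcone : ∀ ⦃s t : ℝ⦄, 0 < s → 0 < t → ∀ ⦃x y : V⦄, x ∈ C → y ∈ C → s • x + t • y ∈ C)
    (f : V → ℝ) (hf : DConvexOn D C f)
    (c : ℝ) (hgrowth : ∀ x ∈ C, |f x| ≤ c * (‖x‖ + 1)) :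
    ∃ g : V → ℝ, (∀ x ∈ C, upperRecession C f x = (g x : EReal)) ∧ DConvexOn D C g := by
  classical
  refine ⟨fun v => (upperRecession C f v).toReal,
    fun x hx => aux_coe hCopen hCcone hgrowth hx, ?_⟩
  intro x y hx hy hxyD hsegC
  refine ⟨convex_segment x y, ?_⟩
  intro z hz w hw a b ha hb hab
  have hb2 : b = 1 - a := by linarith
  subst hb2
  have hzC : z ∈ C := hsegC hz
  have hwC : w ∈ C := hsegC hw
  have hzwseg : segment ℝ z w ⊆ C := fun v hv =>
    hsegC ((convex_segment x y).segment_subset hz hw hv)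
  have hmseg : a • z + (1 - a) • w ∈ segment ℝ z w := ⟨a, 1 - a, ha, hb, hab, rfl⟩
  set m := a • z + (1 - a) • w with hm
  have hmC : m ∈ C := hzwseg hmseg
  -- the direction z - w lies in D
  have hzwD : z - w ∈ D := by
    obtain ⟨a₁, b₁, ha₁, hb₁, hab₁, rfl⟩ := hz
    obtain ⟨a₂, b₂, ha₂, hb₂, hab₂, rfl⟩ := hw
    have h1 : b₁ = 1 - a₁ := by linarith
    have h2 : b₂ = 1 - a₂ := by linarith
    subst h1; subst h2
    have heq : (a₁ • x + (1 - a₁) • y) - (a₂ • x + (1 - a₂) • y)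
        = (a₁ - a₂) • (x - y) := by module
    rw [heq]
    exact hDbal _ _ hxyD
  -- a compactness margin around the segment
  have hcseg : IsCompact (segment ℝ z w) := by
    rw [segment_eq_image]
    exact isCompact_Icc.image (by continuity)
  obtain ⟨δ, hδ, hthick⟩ := hcseg.exists_thickening_subset_open hCopen hzwseg
  have hperturb : ∀ q ∈ segment ℝ z w, ∀ e : V, ‖e‖ < δ → q + e ∈ C := by
    intro q hq e he
    apply hthick
    rw [Metric.mem_thickening_iff]
    exact ⟨q, hq, by rw [dist_eq_norm]; simpa using he⟩
  -- translation maps between the recession filters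
  have htend : ∀ v ∈ segment ℝ z w,
      Filter.Tendsto (fun p : ℝ × V => (p.1, p.2 - m + v))
        ((Filter.atTop ×ˢ nhds m) ⊓ Filter.principal {p : ℝ × V | p.1 • p.2 ∈ C})
        ((Filter.atTop ×ˢ nhds v) ⊓ Filter.principal {p : ℝ × V | p.1 • p.2 ∈ C}) := by
    intro v hv
    refine Filter.tendsto_inf.2 ⟨?_, ?_⟩
    · have h1 : Filter.Tendsto (fun p : ℝ × V => p.1)
          ((Filter.atTop ×ˢ nhds m) ⊓ Filter.principal {p : ℝ × V | p.1 • p.2 ∈ C})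
          Filter.atTop := Filter.tendsto_fst.mono_left inf_le_left
      have h2 : Filter.Tendsto (fun p : ℝ × V => p.2 - m + v)
          ((Filter.atTop ×ˢ nhds m) ⊓ Filter.principal {p : ℝ × V | p.1 • p.2 ∈ C})
          (nhds v) := by
        have hc2 : Filter.Tendsto (fun p : ℝ × V => p.2)
            ((Filter.atTop ×ˢ nhds m) ⊓ Filter.principal {p : ℝ × V | p.1 • p.2 ∈ C})
            (nhds m) := Filter.tendsto_snd.mono_left inf_le_left
        have h3 := (hc2.sub (tendsto_const_nhds :
            Filter.Tendsto (fun _ : ℝ × V => m) _ (nhds m))).add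
          (tendsto_const_nhds : Filter.Tendsto (fun _ : ℝ × V => v) _ (nhds v))
        simpa using h3
      exact h1.prodMk h2
    · rw [Filter.tendsto_principal]
      have hb' := Filter.prod_mem_prod (Filter.Ioi_mem_atTop (0 : ℝ))
        (Metric.ball_mem_nhds m hδ)
      filter_upwards [(inf_le_left : _ ≤ Filter.atTop ×ˢ nhds m) hb'] with p hp
      obtain ⟨ht, hball'⟩ := hp
      have hed : ‖p.2 - m‖ < δ := mem_ball_iff_norm.1 hball'
      have heq : p.2 - m + v = v + (p.2 - m) := by abel
      rw [heq]
      exact aux_cone_smul hCcone ht (hperturb v hv _ hed)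
  -- the goal, as a real inequality
  simp only [smul_eq_mul]
  refine le_of_forall_pos_le_add ?_
  intro ε' hε'
  set gz : ℝ := (upperRecession C f z).toReal with hgz
  set gw : ℝ := (upperRecession C f w).toReal with hgw
  -- eventual upper bounds pulled back from z and w
  have hevz : ∀ᶠ p : ℝ × V in
      (Filter.atTop ×ˢ nhds m) ⊓ Filter.principal {p : ℝ × V | p.1 • p.2 ∈ C},
      f (p.1 • (p.2 - m + z)) / p.1 < gz + ε' := by
    have h1 : upperRecession C f z < ((gz + ε' : ℝ) : EReal) := by
      rw [aux_coe hCopen hCcone hgrowth hzC]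
      exact_mod_cast lt_add_of_pos_right gz hε'
    have h2 := Filter.eventually_lt_of_limsup_lt h1
    have h3 := (htend z (left_mem_segment ℝ z w)).eventually h2
    exact h3.mono fun p hp => by exact_mod_cast hp
  have hevw : ∀ᶠ p : ℝ × V in
      (Filter.atTop ×ˢ nhds m) ⊓ Filter.principal {p : ℝ × V | p.1 • p.2 ∈ C},
      f (p.1 • (p.2 - m + w)) / p.1 < gw + ε' := by
    have h1 : upperRecession C f w < ((gw + ε' : ℝ) : EReal) := by
      rw [aux_coe hCopen hCcone hgrowth hwC]
      exact_mod_cast lt_add_of_pos_right gw hε'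
    have h2 := Filter.eventually_lt_of_limsup_lt h1
    have h3 := (htend w (right_mem_segment ℝ z w)).eventually h2
    exact h3.mono fun p hp => by exact_mod_cast hp
  -- the eventual convexity inequality
  have hevc : ∀ᶠ p : ℝ × V in
      (Filter.atTop ×ˢ nhds m) ⊓ Filter.principal {p : ℝ × V | p.1 • p.2 ∈ C},
      f (p.1 • p.2) / p.1
        ≤ a * (f (p.1 • (p.2 - m + z)) / p.1) + (1 - a) * (f (p.1 • (p.2 - m + w)) / p.1) := by
    have hb' := Filter.prod_mem_prod (Filter.Ioi_mem_atTop (0 : ℝ))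
      (Metric.ball_mem_nhds m hδ)
    filter_upwards [(inf_le_left : _ ≤ Filter.atTop ×ˢ nhds m) hb'] with p hp
    obtain ⟨ht, hball'⟩ := hp
    have ht : (0 : ℝ) < p.1 := ht
    have hed : ‖p.2 - m‖ < δ := mem_ball_iff_norm.1 hball'
    have hzeC : z + (p.2 - m) ∈ C := hperturb z (left_mem_segment ℝ z w) _ hed
    have hweC : w + (p.2 - m) ∈ C := hperturb w (right_mem_segment ℝ z w) _ hed
    have hz' : p.1 • (z + (p.2 - m)) ∈ C := aux_cone_smul hCcone ht hzeC
    have hw' : p.1 • (w + (p.2 - m)) ∈ C := aux_cone_smul hCcone ht hweC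
    have hdir : p.1 • (z + (p.2 - m)) - p.1 • (w + (p.2 - m)) ∈ D := by
      have heq : p.1 • (z + (p.2 - m)) - p.1 • (w + (p.2 - m)) = p.1 • (z - w) := by
        module
      rw [heq]
      exact hDbal _ _ hzwD
    have hsub : segment ℝ (p.1 • (z + (p.2 - m))) (p.1 • (w + (p.2 - m))) ⊆ C := by
      rintro v ⟨s₁, s₂, hs₁, hs₂, hs, rfl⟩
      have hq : s₁ • z + s₂ • w ∈ segment ℝ z w := ⟨s₁, s₂, hs₁, hs₂, hs, rfl⟩
      have hqC : (s₁ • z + s₂ • w) + (p.2 - m) ∈ C := hperturb _ hq _ hed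
      have heq : s₁ • p.1 • (z + (p.2 - m)) + s₂ • p.1 • (w + (p.2 - m))
          = p.1 • ((s₁ • z + s₂ • w) + (p.2 - m)) := by
        have hs2 : s₂ = 1 - s₁ := by linarith
        subst hs2; module
      rw [heq]
      exact aux_cone_smul hCcone ht hqC
    have hcvx := hf hz' hw' hdir hsub
    have hineq := hcvx.2 (left_mem_segment ℝ _ _) (right_mem_segment ℝ _ _) ha hb hab
    have harg : a • p.1 • (z + (p.2 - m)) + (1 - a) • p.1 • (w + (p.2 - m))
        = p.1 • p.2 := by
      have hp2 : p.2 = m + (p.2 - m) := by abel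
      rw [hp2, hm]; module
    rw [harg] at hineq
    have hzarg : p.2 - m + z = z + (p.2 - m) := by abel
    have hwarg : p.2 - m + w = w + (p.2 - m) := by abel
    rw [hzarg, hwarg]
    have heq2 : a * (f (p.1 • (z + (p.2 - m))) / p.1)
        + (1 - a) * (f (p.1 • (w + (p.2 - m))) / p.1)
        = (a * f (p.1 • (z + (p.2 - m))) + (1 - a) * f (p.1 • (w + (p.2 - m)))) / p.1 := by
      ring
    rw [heq2]
    have hnum : f (p.1 • p.2)
        ≤ a * f (p.1 • (z + (p.2 - m))) + (1 - a) * f (p.1 • (w + (p.2 - m))) := by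
      simpa [smul_eq_mul] using hineq
    exact div_le_div_of_nonneg_right hnum ht.le
  -- combine everything
  have hfinal : ∀ᶠ p : ℝ × V in
      (Filter.atTop ×ˢ nhds m) ⊓ Filter.principal {p : ℝ × V | p.1 • p.2 ∈ C},
      ((f (p.1 • p.2) / p.1 : ℝ) : EReal)
        ≤ ((a * gz + (1 - a) * gw + ε' : ℝ) : EReal) := by
    filter_upwards [hevc, hevz, hevw] with p h1 h2 h3
    have h4 : f (p.1 • p.2) / p.1 ≤ a * gz + (1 - a) * gw + ε' := by
      nlinarith [mul_le_mul_of_nonneg_left h2.le ha, mul_le_mul_of_nonneg_left h3.le hb]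
    exact_mod_cast h4
  have hlim : upperRecession C f m ≤ ((a * gz + (1 - a) * gw + ε' : ℝ) : EReal) :=
    Filter.limsup_le_of_le (by isBoundedDefault) hfinal
  rw [aux_coe hCopen hCcone hgrowth hmC] at hlim
  exact_mod_cast hlim
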